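/- Let M be an n×n real symmetric matrix and let N be an n×n real symmetric idempotent (projection) matrix. Suppose θ ∈ ℝ is an eigenvalue of M + Q·N with multiplicity at least k for every Q ∈ ℝ. Then there exist k orthonormal vectors w_1, …, w_k with N w_i = 0 and M w_i = θ w_i for all i = 1, …, k. -/

import Mathlib

/-!
If `v ∈ ker (A + s P)` and `w ∈ ker (A + t P)` with `s ≠ t`, where `A = M - θ` and `P = N` are
symmetric, then comparing `⟪(A + s P) v, w⟫ = 0` with `⟪v, (A + t P) w⟫ = 0` gives
`(t - s) ⟪v, P w⟫ = 0`, and since `P` is an orthogonal projection, `P v ⟂ P w`. Hence if `P` were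
nonzero on every kernel `ker (A + s P)`, the values `P v_s` for `n + 1` distinct `s` would form an
orthogonal family of nonzero vectors in an `n`-dimensional space. So for some `s` the kernel of
`A + s P` lies in `ker A ⊓ ker P`, which therefore has dimension at least `k`.
-/

open Matrix LinearMap

namespace LinearMap.IsSymmetric

variable {E : Type*} [NormedAddCommGroup E] [InnerProductSpace ℝ E] {A P : E →ₗ[ℝ] E}

theorem inner_apply_eq_zero_of_mem_ker_add_smul (hA : A.IsSymmetric) (hP : P.IsSymmetric)
    {s t : ℝ} (hst : s ≠ t) {v w : E} (hv : v ∈ ker (A + s • P)) (hw : w ∈ ker (A + t • P)) :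
    inner ℝ v (P w) = 0 := by
  have hv' : inner ℝ ((A + s • P) v) w = 0 := by rw [mem_ker.1 hv, inner_zero_left]
  have hw' : inner ℝ v ((A + t • P) w) = 0 := by rw [mem_ker.1 hw, inner_zero_right]
  simp only [add_apply, smul_apply, inner_add_left, inner_add_right, inner_smul_left,
    inner_smul_right, hA v w, hP v w, conj_trivial] at hv' hw'
  have : (t - s) * inner ℝ v (P w) = 0 := by linear_combination hw' - hv'
  exact (mul_eq_zero.1 this).resolve_left (sub_ne_zero.2 hst.symm)

theorem inner_apply_apply_eq_zero_of_mem_ker_add_smul (hA : A.IsSymmetric)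
    (hP : P.IsSymmetric) (hPP : IsIdempotentElem P) {s t : ℝ} (hst : s ≠ t) {v w : E}
    (hv : v ∈ ker (A + s • P)) (hw : w ∈ ker (A + t • P)) :
    inner ℝ (P v) (P w) = 0 := by
  rw [hP, ← Module.End.mul_apply, hPP.eq]
  exact hA.inner_apply_eq_zero_of_mem_ker_add_smul hP hst hv hw

theorem exists_ker_add_smul_le_ker [FiniteDimensional ℝ E] (hA : A.IsSymmetric)
    (hP : P.IsSymmetric) (hPP : IsIdempotentElem P) :
    ∃ s : ℝ, ker (A + s • P) ≤ ker P := by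
  by_contra! h
  simp only [SetLike.not_le_iff_exists, mem_ker] at h
  choose v hv hPv using h
  let u : Fin (Module.finrank ℝ E + 1) → E := fun i => P (v i)
  have hu : LinearIndependent ℝ u :=
    linearIndependent_of_ne_zero_of_inner_eq_zero (fun i => hPv _) fun i j hij =>
      inner_apply_apply_eq_zero_of_mem_ker_add_smul hA hP hPP
        (by exact_mod_cast Fin.val_injective.ne hij) (hv _) (hv _)
  simpa using hu.fintype_card_le_finrank

end LinearMap.IsSymmetric

theorem Submodule.exists_orthonormal_of_le_finrank {E : Type*} [NormedAddCommGroup E]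
    [InnerProductSpace ℝ E] (V : Submodule ℝ E) [FiniteDimensional ℝ V] {k : ℕ}
    (hk : k ≤ Module.finrank ℝ V) :
    ∃ w : Fin k → E, Orthonormal ℝ w ∧ ∀ i, w i ∈ V := by
  let b := stdOrthonormalBasis ℝ V
  refine ⟨fun i => b (Fin.castLE hk i), ?_, fun i => (b _).2⟩
  exact (b.orthonormal.comp_linearIsometry V.subtypeₗᵢ).comp _ (Fin.castLE_injective hk)

theorem LinearMap.IsSymmetric.exists_orthonormal_mem_ker_inf_ker {E : Type*}
    [NormedAddCommGroup E] [InnerProductSpace ℝ E] [FiniteDimensional ℝ E] {A P : E →ₗ[ℝ] E}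
    (hA : A.IsSymmetric) (hP : P.IsSymmetric) (hPP : IsIdempotentElem P) {k : ℕ}
    (hk : ∀ s : ℝ, k ≤ Module.finrank ℝ (ker (A + s • P))) :
    ∃ w : Fin k → E, Orthonormal ℝ w ∧ ∀ i, w i ∈ ker A ⊓ ker P := by
  obtain ⟨s, hs⟩ := hA.exists_ker_add_smul_le_ker hP hPP
  have hle : ker (A + s • P) ≤ ker A ⊓ ker P := fun v hv => by
    have hPv : P v = 0 := hs hv
    simpa [hPv] using hv
  exact (ker A ⊓ ker P).exists_orthonormal_of_le_finrank ((hk s).trans (Submodule.finrank_mono hle))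

theorem Matrix.finrank_ker_toEuclideanLin {𝕜 m n : Type*} [RCLike 𝕜] [Fintype n]
    [DecidableEq n] (X : Matrix m n 𝕜) :
    Module.finrank 𝕜 (ker (toEuclideanLin X)) = Module.finrank 𝕜 (ker X.mulVecLin) := by
  have : ker (toEuclideanLin X) =
      (ker X.mulVecLin).map (WithLp.linearEquiv 2 𝕜 (n → 𝕜)).symm.toLinearMap := by
    ext v
    simp [toLpLin_apply]
  rw [this, LinearEquiv.finrank_map_eq]

theorem stmt_19 {n : ℕ} (M N : Matrix (Fin n) (Fin n) ℝ)
    (hM : M.IsSymm) (hN : N.IsSymm) (hNidem : N * N = N)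
    (θ : ℝ) (k : ℕ)
    -- `θ` is an eigenvalue of `M + Q·N` with multiplicity at least `k` for every `Q`
    (hmult : ∀ Q : ℝ,
      k ≤ Module.finrank ℝ (LinearMap.ker (M + Q • N - θ • (1 : Matrix (Fin n) (Fin n) ℝ)).mulVecLin)) :
    ∃ w : Fin k → (Fin n → ℝ),
      (∀ i j, (∑ x, w i x * w j x) = if i = j then 1 else 0) ∧
      (∀ i, N.mulVec (w i) = 0) ∧
      (∀ i, M.mulVec (w i) = θ • w i) := by
  have hA : (toEuclideanLin (M - θ • 1)).IsSymmetric := by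
    simpa only [isSymmetric_toEuclideanLin_iff, isHermitian_iff_isSymm] using
      hM.sub (isSymm_one.smul θ)
  have hP : (toEuclideanLin N).IsSymmetric := by simpa using hN
  have hPP : IsIdempotentElem (toEuclideanLin N) := by
    rw [IsIdempotentElem, Module.End.mul_eq_comp, ← toLpLin_mul_same, hNidem]
  have hk (s : ℝ) :
      k ≤ Module.finrank ℝ (ker (toEuclideanLin (M - θ • 1) + s • toEuclideanLin N)) := by
    rw [← map_smul, ← map_add, finrank_ker_toEuclideanLin, sub_add_eq_add_sub]
    exact hmult s
  obtain ⟨w, hw, hwker⟩ := hA.exists_orthonormal_mem_ker_inf_ker hP hPP hk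
  refine ⟨fun i => WithLp.ofLp (w i), fun i j => ?_, fun i => ?_, fun i => ?_⟩
  · simpa [EuclideanSpace.inner_eq_star_dotProduct, dotProduct, mul_comm] using
      orthonormal_iff_ite.1 hw i j
  · simpa [toLpLin_apply] using (hwker i).2
  · simpa [sub_mulVec, sub_eq_zero] using congrArg WithLp.ofLp (hwker i).1
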